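/- arXiv:1203.5462 — 3 statements merged into one kernel-verified Lean document; each statement's English description precedes it below -/
import Mathlib

section
/- For real β with β+1 > 0 and β − 2α + 1 > 0, and a > 0, the integral ∫_0^∞ K̃_α(a x) x^β dx equals 2^{β−1} a^{−β−1} Γ((β+1)/2) Γ((β−2α+1)/2), where K̃_α(x) = (x/2)^{−α} K_α(x) is the renormalized modified Bessel function of the second kind. -/
/-!
Substituting `s = (y / 2) e^{-t}` in `2 K_α(y) = ∫_ℝ e^{-y cosh t} e^{α t} dt` gives
`(y / 2)^{-α} K_α(y) = ½ ∫_0^∞ e^{-s - y² / (4 s)} s^{-α-1} ds`.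
Insert this with `y = a x` and exchange the order of integration (the integrand is positive):
the `x`-integral is the Gaussian moment
`∫_0^∞ x^β e^{-a² x² / (4 s)} dx = ½ (a / 2)^{-β-1} Γ((β + 1) / 2) s^{(β + 1) / 2}`,
and what remains of the `s`-integral is `Γ((β − 2α + 1) / 2)`.
-/

/-- The modified Bessel function of the second kind,
`K_α(x) = ∫_0^∞ e^{−x cosh t} cosh(α t) dt`. -/
noncomputable def besselK (α x : ℝ) : ℝ :=
  ∫ t in Set.Ioi (0 : ℝ), Real.exp (-x * Real.cosh t) * Real.cosh (α * t)

open Real Set MeasureTheory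

lemma sq_div_four_le_cosh (t : ℝ) : t ^ 2 / 4 ≤ cosh t := by
  have h := quadratic_le_exp_of_nonneg (abs_nonneg t)
  rw [← cosh_abs, cosh_eq]
  nlinarith [exp_pos (-|t|), abs_nonneg t, sq_abs t]

lemma integrable_exp_neg_mul_cosh_mul_exp (γ : ℝ) {y : ℝ} (hy : 0 < y) :
    Integrable fun t => exp (-(y * cosh t)) * exp (γ * t) := by
  refine ((integrable_exp_neg_mul_sq (by positivity : 0 < y / 8)).const_mul
    (exp (2 * y * (γ / y) ^ 2))).mono' (by fun_prop) (ae_of_all _ fun t => ?_)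
  rw [norm_of_nonneg (by positivity), ← exp_add, ← exp_add, exp_le_exp]
  -- `y cosh t ≥ y t² / 4`, and completing the square: `γ t ≤ y t² / 8 + 2 y (γ / y)²`
  have hγ : γ = y * (γ / y) := by field_simp
  have hcosh := mul_le_mul_of_nonneg_left (sq_div_four_le_cosh t) hy.le
  set z := γ / y
  rw [hγ]
  nlinarith [mul_nonneg hy.le (sq_nonneg (t - 4 * z))]

lemma integral_exp_neg_mul_cosh_mul_exp_eq_two_mul_besselK (α : ℝ) {y : ℝ} (hy : 0 < y) :
    ∫ t, exp (-(y * cosh t)) * exp (α * t) = 2 * besselK α y := by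
  have hf := integrable_exp_neg_mul_cosh_mul_exp α hy
  rw [← intervalIntegral.integral_Iic_add_Ioi (b := 0) hf.integrableOn hf.integrableOn,
    ← neg_zero, ← integral_comp_neg_Ioi, neg_zero,
    ← integral_add hf.comp_neg.integrableOn hf.integrableOn,
    besselK, ← integral_const_mul]
  refine setIntegral_congr_fun measurableSet_Ioi fun t _ => ?_
  simp only [cosh_neg, mul_neg, neg_mul, cosh_eq (α * t)]
  ring

lemma rpow_neg_mul_besselK_eq_integral (α : ℝ) {y : ℝ} (hy : 0 < y) :
    (y / 2) ^ (-α) * besselK α y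
      = 1 / 2 * ∫ s in Ioi 0, exp (-s - y ^ 2 / (4 * s)) * s ^ (-α - 1) := by
  set φ : ℝ → ℝ := fun t => y / 2 * exp (-t)
  have hφ_image : φ '' univ = Ioi 0 := by
    rw [image_univ]
    refine Subset.antisymm (range_subset_iff.2 fun t => mem_Ioi.2 (by positivity))
      fun s (hs : 0 < s) => ⟨log (y / (2 * s)), ?_⟩
    simp only [φ, ← log_inv, exp_log (by positivity : 0 < (y / (2 * s))⁻¹)]
    field_simp
  have hφ_deriv (t : ℝ) : HasDerivAt φ (-φ t) t := by
    simpa [φ, mul_comm] using ((hasDerivAt_exp (-t)).comp t (hasDerivAt_neg t)).const_mul (y / 2)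
  have hφ_inj : InjOn φ univ := fun s _ t _ h =>
    neg_injective <| exp_injective <| mul_left_cancel₀ (by positivity) h
  -- for `s = φ t`: `s + y² / (4 s) = y cosh t` and `s ^ (-α) = (y / 2) ^ (-α) * exp (α t)`
  have hsubst (t : ℝ) : |-φ t| • (exp (-φ t - y ^ 2 / (4 * φ t)) * φ t ^ (-α - 1))
      = (y / 2) ^ (-α) * (exp (-(y * cosh t)) * exp (α * t)) := by
    have hcosh : -φ t - y ^ 2 / (4 * φ t) = -(y * cosh t) := by
      simp only [φ, cosh_eq, exp_neg]; field_simp; ring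
    have hpow : exp (-t * (-α - 1)) = exp (α * t) * exp t := by
      rw [← exp_add]; congr 1; ring
    have hy2 : (y / 2) ^ (-α) = (y / 2) ^ (-α - 1) * (y / 2) := by
      rw [← rpow_add_one (by positivity)]; congr 1; ring
    rw [abs_neg, abs_of_pos (by positivity), smul_eq_mul, hcosh, mul_rpow (by positivity)
      (by positivity), ← exp_mul, hpow, hy2, exp_neg]
    simp only [φ, exp_neg]
    field_simp
  rw [← hφ_image, integral_image_eq_integral_abs_deriv_smul MeasurableSet.univ
    (fun t _ => (hφ_deriv t).hasDerivWithinAt) hφ_inj, setIntegral_univ]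
  simp_rw [hsubst]
  rw [integral_const_mul, integral_exp_neg_mul_cosh_mul_exp_eq_two_mul_besselK α hy]
  ring

lemma integral_rpow_mul_exp_neg_sq_div (β : ℝ) {a s : ℝ} (hβ : -1 < β) (ha : 0 < a)
    (hs : 0 < s) :
    ∫ x in Ioi 0, x ^ β * exp (-(a ^ 2 / (4 * s)) * x ^ (2 : ℝ))
      = (a / 2) ^ (-(β + 1)) * (1 / 2 * Gamma ((β + 1) / 2)) * s ^ ((β + 1) / 2) := by
  have hb : a ^ 2 / (4 * s) = (a / 2) ^ (2 : ℝ) * s⁻¹ := by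
    rw [rpow_two]; field_simp; ring
  rw [integral_rpow_mul_exp_neg_mul_rpow two_pos hβ (by positivity), hb,
    mul_rpow (by positivity) (by positivity), ← rpow_mul (by positivity),
    ← rpow_neg_eq_inv_rpow]
  ring_nf

lemma integral_mul_rpow_integral_exp_neg_sub_sq_div (α β : ℝ) {a : ℝ} (hβ : -1 < β)
    (hαβ : 0 < β - 2 * α + 1) (ha : 0 < a) :
    ∫ x in Ioi 0, (∫ s in Ioi 0, exp (-s - (a * x) ^ 2 / (4 * s)) * s ^ (-α - 1)) * x ^ β
      = (a / 2) ^ (-(β + 1)) * (1 / 2 * Gamma ((β + 1) / 2)) * Gamma ((β - 2 * α + 1) / 2) := by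
  set C := (a / 2) ^ (-(β + 1)) * (1 / 2 * Gamma ((β + 1) / 2))
  have hαβ' : 0 < (β - 2 * α + 1) / 2 := by positivity
  set F : ℝ → ℝ → ℝ := fun s x =>
    exp (-s) * s ^ (-α - 1) * (x ^ β * exp (-(a ^ 2 / (4 * s)) * x ^ (2 : ℝ)))
  have hF (s x : ℝ) : exp (-s - (a * x) ^ 2 / (4 * s)) * s ^ (-α - 1) * x ^ β = F s x := by
    simp only [F, rpow_two, sub_eq_add_neg, exp_add]
    ring_nf
  have hF_inner {s : ℝ} (hs : 0 < s) :
      ∫ x in Ioi 0, F s x = C * (exp (-s) * s ^ ((β - 2 * α + 1) / 2 - 1)) := by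
    rw [integral_const_mul, integral_rpow_mul_exp_neg_sq_div β hβ ha hs]
    have : s ^ ((β - 2 * α + 1) / 2 - 1) = s ^ (-α - 1) * s ^ ((β + 1) / 2) := by
      rw [← rpow_add hs]; congr 1; ring
    rw [this]; ring
  have hF_int : Integrable (Function.uncurry F)
      ((volume.restrict (Ioi 0)).prod (volume.restrict (Ioi 0))) := by
    refine (integrable_prod_iff (by fun_prop)).2 ⟨?_, ?_⟩
    · filter_upwards [ae_restrict_mem measurableSet_Ioi] with s (hs : 0 < s)
      exact (integrableOn_rpow_mul_exp_neg_mul_rpow hβ two_pos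
        (by positivity : 0 < a ^ 2 / (4 * s))).const_mul (exp (-s) * s ^ (-α - 1))
    · refine ((GammaIntegral_convergent (s := (β - 2 * α + 1) / 2) hαβ').const_mul C).congr ?_
      filter_upwards [ae_restrict_mem measurableSet_Ioi] with s (hs : 0 < s)
      rw [← hF_inner hs]
      refine setIntegral_congr_fun measurableSet_Ioi fun x (hx : 0 < x) => ?_
      exact (norm_of_nonneg (by positivity)).symm
  calc ∫ x in Ioi 0, (∫ s in Ioi 0, exp (-s - (a * x) ^ 2 / (4 * s)) * s ^ (-α - 1)) * x ^ β
      = ∫ x in Ioi 0, ∫ s in Ioi 0, F s x := by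
        simp_rw [← integral_mul_const, hF]
    _ = ∫ s in Ioi 0, ∫ x in Ioi 0, F s x := (integral_integral_swap hF_int).symm
    _ = ∫ s in Ioi 0, C * (exp (-s) * s ^ ((β - 2 * α + 1) / 2 - 1)) :=
        setIntegral_congr_fun measurableSet_Ioi fun s hs => hF_inner hs
    _ = C * Gamma ((β - 2 * α + 1) / 2) := by
        rw [integral_const_mul, Gamma_eq_integral hαβ']

/-- For `β+1 > 0`, `β − 2α + 1 > 0` and `a > 0`,
`∫_0^∞ K̃_α(a x) x^β dx = 2^{β−1} a^{−β−1} Γ((β+1)/2) Γ((β−2α+1)/2)`,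
where `K̃_α(x) = (x/2)^{−α} K_α(x)`. -/
theorem stmt_2 (α β a : ℝ) (h1 : 0 < β + 1) (h2 : 0 < β - 2 * α + 1) (ha : 0 < a) :
    ∫ x in Set.Ioi (0 : ℝ), ((a * x / 2) ^ (-α) * besselK α (a * x)) * x ^ β
      = 2 ^ (β - 1) * a ^ (-(β + 1)) * Real.Gamma ((β + 1) / 2)
        * Real.Gamma ((β - 2 * α + 1) / 2) := by
  have hrep : ∀ x ∈ Ioi (0 : ℝ), (a * x / 2) ^ (-α) * besselK α (a * x) * x ^ β
      = 1 / 2 * ((∫ s in Ioi 0, exp (-s - (a * x) ^ 2 / (4 * s)) * s ^ (-α - 1)) * x ^ β) :=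
    fun x hx => by rw [rpow_neg_mul_besselK_eq_integral α (mul_pos ha hx), mul_assoc]
  have hconst : (a / 2) ^ (-(β + 1)) = 4 * 2 ^ (β - 1) * a ^ (-(β + 1)) := by
    rw [div_rpow ha.le zero_le_two, rpow_neg zero_le_two (β + 1), div_inv_eq_mul,
      show β + 1 = β - 1 + 2 by ring, rpow_add two_pos]
    norm_num
    ring
  rw [setIntegral_congr_fun measurableSet_Ioi hrep, integral_const_mul,
    integral_mul_rpow_integral_exp_neg_sub_sq_div α β (by linarith) h2 ha, hconst]
  ring
end

section
/- In a Euclidean Jordan algebra V of rank r with λ ∈ ℝ, the commutator of the identity component Bessel operator 𝓑_e := (e | 𝓑_λ) with multiplication by tr(x) equals 2𝓔 + rλ, where 𝓔 = (x | ∂/∂x) is the Euler operator: [𝓑_e, tr(x)] f = 2𝓔f + rλ f for all smooth f. -/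
open scoped RealInnerProductSpace

/-- The quadratic representation `P(x) = 2 L(x)² − L(x²)` of a Jordan product `mul`. -/
noncomputable def quadRep (n : ℕ)
    (mul : EuclideanSpace ℝ (Fin n) →ₗ[ℝ] EuclideanSpace ℝ (Fin n) →ₗ[ℝ] EuclideanSpace ℝ (Fin n))
    (x : EuclideanSpace ℝ (Fin n)) :
    EuclideanSpace ℝ (Fin n) →ₗ[ℝ] EuclideanSpace ℝ (Fin n) :=
  2 • ((mul x).comp (mul x)) - mul (mul x x)

/-- The polarized quadratic representation `P(x,y) = ½(P(x+y) − P(x) − P(y))`. -/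
noncomputable def quadRepPol (n : ℕ)
    (mul : EuclideanSpace ℝ (Fin n) →ₗ[ℝ] EuclideanSpace ℝ (Fin n) →ₗ[ℝ] EuclideanSpace ℝ (Fin n))
    (a b : EuclideanSpace ℝ (Fin n)) :
    EuclideanSpace ℝ (Fin n) →ₗ[ℝ] EuclideanSpace ℝ (Fin n) :=
  (1 / 2 : ℝ) • (quadRep n mul (a + b) - quadRep n mul a - quadRep n mul b)

/-- The Bessel operator `𝓑_λ u = ∑_{α,β} ∂²u/∂x_α∂x_β P(e_α,e_β)x + λ ∑_α ∂u/∂x_α e_α`,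
computed in the standard orthonormal basis of Euclidean space. -/
noncomputable def besselOp (n : ℕ)
    (mul : EuclideanSpace ℝ (Fin n) →ₗ[ℝ] EuclideanSpace ℝ (Fin n) →ₗ[ℝ] EuclideanSpace ℝ (Fin n))
    (l : ℝ) (f : EuclideanSpace ℝ (Fin n) → ℝ) (x : EuclideanSpace ℝ (Fin n)) :
    EuclideanSpace ℝ (Fin n) :=
  (∑ α : Fin n, ∑ β : Fin n,
      iteratedFDeriv ℝ 2 f x
          ![EuclideanSpace.basisFun (Fin n) ℝ α, EuclideanSpace.basisFun (Fin n) ℝ β] •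
        quadRepPol n mul (EuclideanSpace.basisFun (Fin n) ℝ α)
          (EuclideanSpace.basisFun (Fin n) ℝ β) x)
    + l • (∑ α : Fin n,
        fderiv ℝ f x (EuclideanSpace.basisFun (Fin n) ℝ α) • EuclideanSpace.basisFun (Fin n) ℝ α)


lemma hasFDerivAt_inner_right' {n : ℕ} (e x : EuclideanSpace ℝ (Fin n)) :
    HasFDerivAt (fun y : EuclideanSpace ℝ (Fin n) => ⟪y, e⟫) (innerSL ℝ e) x := by
  have h : (fun y : EuclideanSpace ℝ (Fin n) => ⟪y, e⟫) = ⇑(innerSL ℝ e) :=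
    funext fun y => real_inner_comm _ _
  rw [h]
  exact (innerSL ℝ e).hasFDerivAt

lemma fderiv_tr_mul {n : ℕ} (e : EuclideanSpace ℝ (Fin n)) (f : EuclideanSpace ℝ (Fin n) → ℝ)
    (hf : ContDiff ℝ (⊤ : ℕ∞) f) (x : EuclideanSpace ℝ (Fin n)) :
    fderiv ℝ (fun y => ⟪y, e⟫ * f y) x = ⟪x, e⟫ • fderiv ℝ f x + f x • (innerSL ℝ e) := by
  have h := (hasFDerivAt_inner_right' e x).mul (hf.differentiable (by simp) x).hasFDerivAt
  rw [show (fun y => ⟪y, e⟫ * f y) = (fun y => ⟪y, e⟫) * f from rfl, h.fderiv, real_inner_comm]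

lemma second_deriv_tr_mul {n : ℕ} (e : EuclideanSpace ℝ (Fin n)) (f : EuclideanSpace ℝ (Fin n) → ℝ)
    (hf : ContDiff ℝ (⊤ : ℕ∞) f) (x u v : EuclideanSpace ℝ (Fin n)) :
    iteratedFDeriv ℝ 2 (fun y => ⟪y, e⟫ * f y) x ![u, v]
      = fderiv ℝ f x u * ⟪v, e⟫ + ⟪u, e⟫ * fderiv ℝ f x v
        + ⟪x, e⟫ * iteratedFDeriv ℝ 2 f x ![u, v] := by
  rw [iteratedFDeriv_two_apply, iteratedFDeriv_two_apply]
  have hg : fderiv ℝ (fun y => ⟪y, e⟫ * f y)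
      = fun y => ⟪y, e⟫ • fderiv ℝ f y + f y • (innerSL ℝ e) :=
    funext fun y => fderiv_tr_mul e f hf y
  rw [hg]
  have hdf : HasFDerivAt (fderiv ℝ f) (fderiv ℝ (fderiv ℝ f) x) x :=
    ((hf.fderiv_right (m := 1) (by exact WithTop.coe_le_coe.mpr le_top)).differentiable one_ne_zero x).hasFDerivAt
  have h1 : HasFDerivAt (fun y : EuclideanSpace ℝ (Fin n) => ⟪y, e⟫ • fderiv ℝ f y)
      (⟪x, e⟫ • fderiv ℝ (fderiv ℝ f) x + (innerSL ℝ e).smulRight (fderiv ℝ f x)) x := by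
    have := (hasFDerivAt_inner_right' e x).smul hdf
    exact this
  have h2 : HasFDerivAt
      (fun y : EuclideanSpace ℝ (Fin n) => f y • (innerSL ℝ e : EuclideanSpace ℝ (Fin n) →L[ℝ] ℝ))
      ((fderiv ℝ f x).smulRight (innerSL ℝ e)) x :=
    by have := (hf.differentiable (by simp) x).hasFDerivAt.smul_const (innerSL ℝ e); exact this
  rw [show (fun y : EuclideanSpace ℝ (Fin n) => ⟪y, e⟫ • fderiv ℝ f y + f y • (innerSL ℝ e : EuclideanSpace ℝ (Fin n) →L[ℝ] ℝ)) = (fun y : EuclideanSpace ℝ (Fin n) => ⟪y, e⟫ • fderiv ℝ f y) + (fun y : EuclideanSpace ℝ (Fin n) => f y • (innerSL ℝ e : EuclideanSpace ℝ (Fin n) →L[ℝ] ℝ)) from rfl, (h1.add h2).fderiv]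
  simp only [Matrix.cons_val_zero, Matrix.cons_val_one, Matrix.head_cons,
    ContinuousLinearMap.add_apply, ContinuousLinearMap.smul_apply,
    ContinuousLinearMap.smulRight_apply, innerSL_apply_apply, smul_eq_mul]
  rw [real_inner_comm e u, real_inner_comm e v]
  ring

lemma quadRepPol_apply (n : ℕ)
    (mul : EuclideanSpace ℝ (Fin n) →ₗ[ℝ] EuclideanSpace ℝ (Fin n) →ₗ[ℝ] EuclideanSpace ℝ (Fin n))
    (hcomm : ∀ a b, mul a b = mul b a) (a b x : EuclideanSpace ℝ (Fin n)) :
    quadRepPol n mul a b x = mul a (mul b x) + mul b (mul a x) - mul (mul a b) x := by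
  unfold quadRepPol quadRep
  simp only [map_add, LinearMap.add_apply, LinearMap.smul_apply, LinearMap.sub_apply,
    LinearMap.coe_comp, Function.comp_apply, map_smul, hcomm b a]
  module

lemma inner_quadRepPol (n : ℕ)
    (mul : EuclideanSpace ℝ (Fin n) →ₗ[ℝ] EuclideanSpace ℝ (Fin n) →ₗ[ℝ] EuclideanSpace ℝ (Fin n))
    (hcomm : ∀ a b, mul a b = mul b a)
    (hassoc : ∀ a b c, ⟪mul a b, c⟫ = ⟪b, mul a c⟫)
    (e : EuclideanSpace ℝ (Fin n)) (hunit : ∀ a, mul e a = a)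
    (a b x : EuclideanSpace ℝ (Fin n)) :
    ⟪quadRepPol n mul a b x, e⟫ = ⟪x, mul a b⟫ := by
  have hue : ∀ c : EuclideanSpace ℝ (Fin n), mul c e = c := fun c => by rw [hcomm, hunit]
  rw [quadRepPol_apply n mul hcomm]
  rw [inner_sub_left, inner_add_left, hassoc, hassoc, hassoc, hue, hue,
    hassoc, hassoc, hcomm b a, hue]
  ring

lemma inner_besselOp (n : ℕ)
    (mul : EuclideanSpace ℝ (Fin n) →ₗ[ℝ] EuclideanSpace ℝ (Fin n) →ₗ[ℝ] EuclideanSpace ℝ (Fin n))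
    (hcomm : ∀ a b, mul a b = mul b a)
    (hassoc : ∀ a b c, ⟪mul a b, c⟫ = ⟪b, mul a c⟫)
    (e : EuclideanSpace ℝ (Fin n)) (hunit : ∀ a, mul e a = a)
    (l : ℝ) (h : EuclideanSpace ℝ (Fin n) → ℝ) (x : EuclideanSpace ℝ (Fin n)) :
    ⟪besselOp n mul l h x, e⟫
      = (∑ α : Fin n, ∑ β : Fin n,
          iteratedFDeriv ℝ 2 h x
              ![EuclideanSpace.basisFun (Fin n) ℝ α, EuclideanSpace.basisFun (Fin n) ℝ β]
            * ⟪x, mul (EuclideanSpace.basisFun (Fin n) ℝ α) (EuclideanSpace.basisFun (Fin n) ℝ β)⟫)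
        + l * ∑ α : Fin n,
            fderiv ℝ h x (EuclideanSpace.basisFun (Fin n) ℝ α)
              * ⟪EuclideanSpace.basisFun (Fin n) ℝ α, e⟫ := by
  unfold besselOp
  rw [inner_add_left, real_inner_smul_left]
  simp only [sum_inner, real_inner_smul_left,
    inner_quadRepPol n mul hcomm hassoc e hunit]

/-- Commutator identity `[𝓑_e, tr(x)] = 2𝓔 + rλ` in a Euclidean Jordan algebra with unit `e`,
trace form equal to the inner product, `tr(x) = (x|e)`, `r = (e|e)` the rank,
and Euler operator `𝓔f(x) = (x|∇f(x))`. -/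
theorem stmt_10 (n : ℕ)
    (mul : EuclideanSpace ℝ (Fin n) →ₗ[ℝ] EuclideanSpace ℝ (Fin n) →ₗ[ℝ] EuclideanSpace ℝ (Fin n))
    (hcomm : ∀ a b, mul a b = mul b a)
    (hjordan : ∀ a b, mul (mul a b) (mul a a) = mul a (mul b (mul a a)))
    (hassoc : ∀ a b c, ⟪mul a b, c⟫ = ⟪b, mul a c⟫)
    (e : EuclideanSpace ℝ (Fin n)) (hunit : ∀ a, mul e a = a)
    (r : ℝ) (hr : ⟪e, e⟫ = r) (l : ℝ)
    (f : EuclideanSpace ℝ (Fin n) → ℝ) (hf : ContDiff ℝ (⊤ : ℕ∞) f) :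
    ∀ x : EuclideanSpace ℝ (Fin n),
      ⟪besselOp n mul l (fun y => ⟪y, e⟫ * f y) x, e⟫
          - ⟪x, e⟫ * ⟪besselOp n mul l f x, e⟫
        = 2 * ⟪x, gradient f x⟫ + r * l * f x := by
  intro x
  rw [inner_besselOp n mul hcomm hassoc e hunit l _ x,
      inner_besselOp n mul hcomm hassoc e hunit l f x]
  simp only [second_deriv_tr_mul e f hf x, fderiv_tr_mul e f hf x,
    ContinuousLinearMap.add_apply, ContinuousLinearMap.smul_apply, innerSL_apply_apply, smul_eq_mul]
  set B : Fin n → EuclideanSpace ℝ (Fin n) := fun α => EuclideanSpace.basisFun (Fin n) ℝ α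
    with hB
  have hue : ∀ c : EuclideanSpace ℝ (Fin n), mul c e = c := fun c => by rw [hcomm, hunit]
  have hrepr : ∀ w : EuclideanSpace ℝ (Fin n), (∑ α : Fin n, ⟪B α, w⟫ • B α) = w := fun w =>
    (EuclideanSpace.basisFun (Fin n) ℝ).sum_repr' w
  have hgrad : ∀ v, fderiv ℝ f x v = ⟪gradient f x, v⟫ := by
    intro v
    rw [gradient, InnerProductSpace.toDual_symm_apply]
  have hcol : ∀ α : Fin n,
      (∑ β : Fin n, ⟪B β, e⟫ * ⟪x, mul (B α) (B β)⟫) = ⟪x, B α⟫ := by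
    intro α
    have h1 : (∑ β : Fin n, ⟪B β, e⟫ * ⟪x, mul (B α) (B β)⟫)
        = ⟪x, mul (B α) (∑ β : Fin n, ⟪B β, e⟫ • B β)⟫ := by
      rw [map_sum, inner_sum]
      exact Finset.sum_congr rfl fun β _ => by rw [map_smul, real_inner_smul_right]
    rw [h1, hrepr e, hue]
  have hS1 : (∑ α : Fin n, fderiv ℝ f x (B α) * ∑ β : Fin n, ⟪B β, e⟫ * ⟪x, mul (B α) (B β)⟫)
      = ⟪x, gradient f x⟫ := by
    rw [Finset.sum_congr rfl fun α _ => by rw [hcol α]]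
    have h2 : (∑ α : Fin n, fderiv ℝ f x (B α) * ⟪x, B α⟫)
        = ⟪x, ∑ α : Fin n, fderiv ℝ f x (B α) • B α⟫ := by
      rw [inner_sum]
      exact Finset.sum_congr rfl fun α _ => by rw [real_inner_smul_right, mul_comm]
    rw [h2]
    congr 1
    have h3 : (∑ α : Fin n, fderiv ℝ f x (B α) • B α)
        = ∑ α : Fin n, ⟪B α, gradient f x⟫ • B α :=
      Finset.sum_congr rfl fun α _ => by rw [hgrad, real_inner_comm]
    rw [h3, hrepr]
  have hS2 : (∑ α : Fin n, ⟪B α, e⟫ * ∑ β : Fin n, fderiv ℝ f x (B β) * ⟪x, mul (B α) (B β)⟫)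
      = ⟪x, gradient f x⟫ := by
    rw [← hS1]
    simp only [Finset.mul_sum]
    rw [Finset.sum_comm]
    refine Finset.sum_congr rfl fun β _ => Finset.sum_congr rfl fun α _ => ?_
    rw [hcomm (B α) (B β)]
    ring
  have hR : (∑ α : Fin n, ⟪e, B α⟫ * ⟪B α, e⟫) = r := by
    have h2 : (∑ α : Fin n, ⟪e, B α⟫ * ⟪B α, e⟫) = ⟪∑ α : Fin n, ⟪B α, e⟫ • B α, e⟫ := by
      rw [sum_inner]
      exact Finset.sum_congr rfl fun α _ =>
        by rw [real_inner_smul_left, real_inner_comm e (B α)]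
    rw [h2, hrepr e, hr]
  simp only [add_mul, Finset.sum_add_distrib, mul_assoc, ← Finset.mul_sum]
  linear_combination hS1 + hS2 + (l * f x) * hR
end

section
/- For λ > 0, the monomials are orthogonal in the Bessel–Fischer inner product on ℂ[z] in one variable: defining [p,q] := p(𝓑) q̄(4z)|_{z=0} with 𝓑 = z d²/dz² + λ d/dz, one has [z^m, z^n] = 0 for m ≠ n and [z^m, z^m] = 4^m m! (λ)_m. Consequently the reproducing kernel of the degree-m component is 𝕂^m(z,w) = (z w̄)^m / (4^m m! (λ)_m) and Σ_m 𝕂^m(z,w) = Γ(λ) Ĩ_{λ−1}(√(z w̄)). -/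
/-!
`𝓑` lowers degrees by one, sending `z^(k+1)` to `(k+1)(λ+k) z^k`. Hence `𝓑^m z^n` vanishes at
`0` unless `m = n`, where it is the constant `n! (λ)_n`. The series identity then holds term by term,
because `Γ(n+λ) = (λ)_n Γ(λ)` with `Γ(λ) ≠ 0` for `λ > 0`.
-/

open Polynomial

/-- The one-variable Bessel operator `𝓑 = z d²/dz² + λ d/dz` acting on polynomials. -/
noncomputable def besselOp1 (l : ℝ) (p : ℂ[X]) : ℂ[X] :=
  X * derivative (derivative p) + C (l : ℂ) * derivative p

/-- The Bessel–Fischer pairing `[p,q] := p(𝓑) q̄(4z) |_{z=0}`, where `q̄` has the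
conjugated coefficients of `q`. -/
noncomputable def besselFischer (l : ℝ) (p q : ℂ[X]) : ℂ :=
  eval 0 (∑ k ∈ p.support,
    p.coeff k • (besselOp1 l)^[k] ((q.map (starRingEnd ℂ)).comp (C (4 : ℂ) * X)))

section BesselOperator

variable (l : ℝ)

lemma besselOp1_C (a : ℂ) : besselOp1 l (C a) = 0 := by
  simp [besselOp1]

lemma besselOp1_C_mul (a : ℂ) (p : ℂ[X]) :
    besselOp1 l (C a * p) = C a * besselOp1 l p := by
  simp only [besselOp1, derivative_C_mul]
  ring

lemma besselOp1_iterate_C_mul (m : ℕ) (a : ℂ) (p : ℂ[X]) :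
    (besselOp1 l)^[m] (C a * p) = C a * (besselOp1 l)^[m] p := by
  induction m generalizing p with
  | zero => rfl
  | succ m ih => rw [Function.iterate_succ_apply, besselOp1_C_mul, ih, Function.iterate_succ_apply]

lemma besselOp1_X_pow_succ (k : ℕ) :
    besselOp1 l (X ^ (k + 1)) = C ((k + 1) * ((l : ℂ) + k)) * X ^ k := by
  cases k with
  | zero => simp [besselOp1]
  | succ k =>
    simp only [besselOp1, derivative_X_pow, Nat.add_sub_cancel, derivative_C_mul]
    push_cast
    simp only [C_add, C_mul, C_1, map_natCast]
    ring

lemma besselOp1_iterate_X_pow_self (n : ℕ) :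
    (besselOp1 l)^[n] (X ^ n) = C (n.factorial * (ascPochhammer ℂ n).eval (l : ℂ)) := by
  induction n with
  | zero => simp
  | succ n ih =>
    rw [Function.iterate_succ_apply, besselOp1_X_pow_succ, besselOp1_iterate_C_mul, ih, ← C_mul,
      ascPochhammer_succ_right, Nat.factorial_succ]
    push_cast
    simp only [eval_mul, eval_add, eval_X, eval_natCast]
    congr 1
    ring

lemma besselOp1_iterate_X_pow_of_le {m n : ℕ} (h : m ≤ n) :
    ∃ c : ℂ, (besselOp1 l)^[m] (X ^ n) = C c * X ^ (n - m) := by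
  induction m generalizing n with
  | zero => exact ⟨1, by simp⟩
  | succ m ih =>
    obtain ⟨k, rfl⟩ : ∃ k, n = k + 1 := ⟨n - 1, by omega⟩
    obtain ⟨c, hc⟩ := ih (n := k) (by omega)
    refine ⟨(k + 1) * ((l : ℂ) + k) * c, ?_⟩
    rw [Function.iterate_succ_apply, besselOp1_X_pow_succ, besselOp1_iterate_C_mul, hc,
      Nat.add_sub_add_right, ← mul_assoc, ← C_mul]

lemma besselOp1_iterate_X_pow_of_lt {m n : ℕ} (h : n < m) :
    (besselOp1 l)^[m] (X ^ n) = 0 := by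
  obtain ⟨k, rfl⟩ : ∃ k, m = k + 1 + n := ⟨m - 1 - n, by omega⟩
  rw [Function.iterate_add_apply, besselOp1_iterate_X_pow_self, Function.iterate_succ_apply,
    besselOp1_C]
  exact Function.iterate_fixed (by simpa using besselOp1_C l 0) k

lemma eval_zero_besselOp1_iterate_X_pow_of_ne {m n : ℕ} (h : m ≠ n) :
    eval 0 ((besselOp1 l)^[m] (X ^ n)) = 0 := by
  rcases h.lt_or_gt with h | h
  · obtain ⟨c, hc⟩ := besselOp1_iterate_X_pow_of_le l h.le
    simp [hc, zero_pow (Nat.sub_ne_zero_of_lt h)]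
  · simp [besselOp1_iterate_X_pow_of_lt l h]

lemma besselFischer_X_pow (m n : ℕ) :
    besselFischer l (X ^ m) (X ^ n) = 4 ^ n * eval 0 ((besselOp1 l)^[m] (X ^ n)) := by
  have hcomp : ((X : ℂ[X]) ^ n).comp (C 4 * X) = C (4 ^ n) * X ^ n := by
    rw [pow_comp, X_comp, mul_pow, ← C_pow]
  rw [besselFischer, Polynomial.map_pow, map_X, hcomp, support_X_pow, Finset.sum_singleton,
    coeff_X_pow_self, one_smul, besselOp1_iterate_C_mul, eval_mul, eval_C]

end BesselOperator

lemma Complex.ofReal_ascPochhammer_eval (n : ℕ) (x : ℝ) :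
    (((ascPochhammer ℝ n).eval x : ℝ) : ℂ) = (ascPochhammer ℂ n).eval (x : ℂ) := by
  rw [ascPochhammer_eval₂ (algebraMap ℝ ℂ)]
  exact (eval₂_at_apply (algebraMap ℝ ℂ) x).symm

lemma Complex.Gamma_nat_add {s : ℂ} (hs : ∀ k : ℕ, s ≠ -k) (n : ℕ) :
    Complex.Gamma (n + s) = (ascPochhammer ℂ n).eval s * Complex.Gamma s := by
  rw [← Complex.Gamma_add_nat_div_Gamma_eq s hs, add_comm,
    div_mul_cancel₀ _ (Complex.Gamma_ne_zero hs)]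

/-- For `λ > 0`, the monomials are orthogonal in the Bessel–Fischer inner product:
`[z^m, z^n] = 0` for `m ≠ n` and `[z^m, z^m] = 4^m m! (λ)_m`. Consequently the reproducing
kernel of the degree-`m` component is `𝕂^m(z,w) = (z w̄)^m/(4^m m! (λ)_m)` and
`∑_m 𝕂^m(z,w) = Γ(λ) Ĩ_{λ−1}(√(z w̄))`. -/
theorem stmt_19 (l : ℝ) (hl : 0 < l) :
    (∀ m n : ℕ, m ≠ n → besselFischer l (X ^ m) (X ^ n) = 0) ∧
    (∀ m : ℕ, besselFischer l (X ^ m) (X ^ m)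
        = 4 ^ m * (m.factorial : ℂ) * (((ascPochhammer ℝ m).eval l : ℝ) : ℂ)) ∧
    (∀ z w : ℂ, ∑' m : ℕ,
          (z * (starRingEnd ℂ) w) ^ m
            / (4 ^ m * (m.factorial : ℂ) * (((ascPochhammer ℝ m).eval l : ℝ) : ℂ))
        = Complex.Gamma (l : ℂ) * ∑' n : ℕ,
            (z * (starRingEnd ℂ) w / 4) ^ n
              / (Complex.Gamma ((n : ℂ) + (l : ℂ)) * (n.factorial : ℂ))) := by
  refine ⟨fun m n hmn => ?_, fun m => ?_, fun z w => ?_⟩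
  · rw [besselFischer_X_pow, eval_zero_besselOp1_iterate_X_pow_of_ne l hmn, mul_zero]
  · rw [besselFischer_X_pow, besselOp1_iterate_X_pow_self, eval_C,
      Complex.ofReal_ascPochhammer_eval, mul_assoc]
  have hl' : ∀ k : ℕ, (l : ℂ) ≠ -k := fun k h => by
    have := congrArg Complex.re h
    simp only [Complex.ofReal_re, Complex.neg_re, Complex.natCast_re] at this
    linarith [(Nat.cast_nonneg k : (0 : ℝ) ≤ k)]
  rw [← tsum_mul_left]
  refine tsum_congr fun n => ?_
  have hP : (ascPochhammer ℂ n).eval (l : ℂ) ≠ 0 := by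
    rw [← Complex.ofReal_ascPochhammer_eval]
    exact_mod_cast (ascPochhammer_pos n l hl).ne'
  rw [Complex.Gamma_nat_add hl', Complex.ofReal_ascPochhammer_eval, div_pow]
  field_simp [Complex.Gamma_ne_zero hl', hP, Nat.factorial_ne_zero]
end
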